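/- arXiv:2106.04786 — 6 statements merged into one kernel-verified Lean document; each statement's English description precedes it below -/
import Mathlib

section
/- Let (yᵏ) be a sequence in ℝⁿ that is quasi-Fejér convergent to a nonempty set W ⊂ ℝⁿ with respect to a sequence of matrices (Dₖ) ⊂ 𝒟_μ. Then (yᵏ) is bounded. Moreover, if some cluster point ȳ of (yᵏ) belongs to W, then the whole sequence converges to ȳ. -/
open RealInnerProductSpace

abbrev EucSp (n : ℕ) := EuclideanSpace ℝ (Fin n)

noncomputable def dipr {n : ℕ} (D : Matrix (Fin n) (Fin n) ℝ) (x y : EucSp n) : ℝ :=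
  ⟪(Matrix.toEuclideanLin D) x, y⟫

noncomputable def dnorm {n : ℕ} (D : Matrix (Fin n) (Fin n) ℝ) (x : EucSp n) : ℝ :=
  Real.sqrt (dipr D x x)

/-- `p` is the exact projection of `v` onto `C` in the `D`-norm. -/
def IsDProj {n : ℕ} (D : Matrix (Fin n) (Fin n) ℝ) (C : Set (EucSp n)) (v p : EucSp n) : Prop :=
  p ∈ C ∧ ∀ z ∈ C, dnorm D (p - v) ≤ dnorm D (z - v)

/-!
If `w ∈ W` then `aₖ = ‖yᵏ - w‖²_{Dₖ}` satisfies `aₖ₊₁ ≤ aₖ + εₖ` with `ε` summable, so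
`aₖ - ∑_{i<k} εᵢ` is antitone and bounded below, and `aₖ` converges. Since every `D`-norm is
within a factor `√μ` of the Euclidean norm, `(yᵏ)` is bounded; and if a subsequence tends to
`ȳ ∈ W`, the limit of `‖yᵏ - ȳ‖²_{Dₖ}` is `0`, because along the subsequence it is at most
`μ ‖yᵏ - ȳ‖²`; hence `yᵏ → ȳ`.
-/

open Filter Topology Finset

theorem exists_tendsto_of_le_add_of_summable {a ε : ℕ → ℝ} (ha : BddBelow (Set.range a))
    (hε : Summable ε) (hstep : ∀ k, a (k + 1) ≤ a k + ε k) :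
    ∃ L, Tendsto a atTop (𝓝 L) := by
  set S : ℕ → ℝ := fun k => ∑ i ∈ range k, ε i
  have hS : Tendsto S atTop (𝓝 (∑' i, ε i)) := hε.hasSum.tendsto_sum_nat
  have hanti : Antitone (a - S) :=
    antitone_nat_of_succ_le fun k => by
      simp only [Pi.sub_apply, S, sum_range_succ]
      linarith [hstep k]
  obtain ⟨A, hA⟩ := ha
  obtain ⟨B, hB⟩ := hS.bddAbove_range
  have hbdd : BddBelow (Set.range (a - S)) :=
    ⟨A - B, by
      rintro _ ⟨k, rfl⟩
      show A - B ≤ a k - S k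
      linarith [hA ⟨k, rfl⟩, hB ⟨k, rfl⟩]⟩
  exact ⟨_, by simpa using (tendsto_atTop_ciInf hanti hbdd).add hS⟩

theorem tendsto_of_norm_sub_sq_le {E : Type*} [SeminormedAddCommGroup E] {y : ℕ → E} {x : E}
    {b : ℕ → ℝ} (hb : Tendsto b atTop (𝓝 0)) (hyb : ∀ k, ‖y k - x‖ ^ 2 ≤ b k) :
    Tendsto y atTop (𝓝 x) := by
  have hsqrt := (Real.continuous_sqrt.tendsto 0).comp hb
  rw [Real.sqrt_zero] at hsqrt
  exact tendsto_iff_norm_sub_tendsto_zero.2 <|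
    squeeze_zero (fun k => norm_nonneg _) (fun k => Real.le_sqrt_of_sq_le (hyb k)) hsqrt

section DNorm

variable {n : ℕ} {D : Matrix (Fin n) (Fin n) ℝ}

theorem dipr_self_eq_sum_eigenvalues (hD : D.IsHermitian) (x : EucSp n) :
    dipr D x x = ∑ i, hD.eigenvalues i * ⟪hD.eigenvectorBasis i, x⟫ ^ 2 := by
  set B := hD.eigenvectorBasis
  have hB : ∀ j, Matrix.toEuclideanLin D (B j) = hD.eigenvalues j • B j := fun j => by
    apply (WithLp.equiv 2 _).injective
    ext i
    simpa [Matrix.toLpLin_apply] using congrFun (hD.mulVec_eigenvectorBasis j) i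
  calc dipr D x x = ⟪Matrix.toEuclideanLin D (∑ i, ⟪B i, x⟫ • B i), x⟫ := by
        rw [B.sum_repr']; rfl
    _ = _ := by
        rw [map_sum, sum_inner]
        refine sum_congr rfl fun i _ => ?_
        rw [map_smul, hB i, inner_smul_left, inner_smul_left, real_inner_comm x]
        simp only [RCLike.conj_to_real]
        ring

theorem mul_norm_sq_le_dipr_self {c : ℝ} (hD : D.IsHermitian) (hc : ∀ i, c ≤ hD.eigenvalues i)
    (x : EucSp n) : c * ‖x‖ ^ 2 ≤ dipr D x x := by
  rw [dipr_self_eq_sum_eigenvalues hD, ← hD.eigenvectorBasis.sum_sq_inner_right x, mul_sum]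
  exact sum_le_sum fun i _ => mul_le_mul_of_nonneg_right (hc i) (sq_nonneg _)

theorem dipr_self_le_mul_norm_sq {C : ℝ} (hD : D.IsHermitian) (hC : ∀ i, hD.eigenvalues i ≤ C)
    (x : EucSp n) : dipr D x x ≤ C * ‖x‖ ^ 2 := by
  rw [dipr_self_eq_sum_eigenvalues hD, ← hD.eigenvectorBasis.sum_sq_inner_right x, mul_sum]
  exact sum_le_sum fun i _ => mul_le_mul_of_nonneg_right (hC i) (sq_nonneg _)

theorem dnorm_sq (hD : D.PosSemidef) (x : EucSp n) : dnorm D x ^ 2 = dipr D x x :=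
  Real.sq_sqrt <| by simpa using mul_norm_sq_le_dipr_self hD.1 hD.eigenvalues_nonneg x

theorem norm_sq_le_mul_dnorm_sq {μ : ℝ} (hμ : 0 < μ) (hD : D.PosDef)
    (hμD : ∀ i, 1 / μ ≤ hD.1.eigenvalues i) (x : EucSp n) : ‖x‖ ^ 2 ≤ μ * dnorm D x ^ 2 := by
  have := mul_norm_sq_le_dipr_self hD.1 hμD x
  rw [one_div_mul_eq_div, div_le_iff₀ hμ] at this
  rw [dnorm_sq hD.posSemidef]
  linarith

theorem dnorm_sq_le_mul_norm_sq {C : ℝ} (hD : D.PosSemidef) (hC : ∀ i, hD.1.eigenvalues i ≤ C)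
    (x : EucSp n) : dnorm D x ^ 2 ≤ C * ‖x‖ ^ 2 :=
  dnorm_sq hD x ▸ dipr_self_le_mul_norm_sq hD.1 hC x

end DNorm

theorem stmt4 {n : ℕ} (μ : ℝ) (hμ : 1 ≤ μ) (W : Set (EucSp n)) (hW : W.Nonempty)
    (y : ℕ → EucSp n) (Dm : ℕ → Matrix (Fin n) (Fin n) ℝ)
    (hpos : ∀ k, (Dm k).PosDef)
    (heig : ∀ k i, 1 / μ ≤ (hpos k).1.eigenvalues i ∧ (hpos k).1.eigenvalues i ≤ μ)
    (hqf : ∀ w ∈ W, ∃ ε : ℕ → ℝ, (∀ k, 0 ≤ ε k) ∧ Summable ε ∧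
      ∀ k, (dnorm (Dm (k + 1)) (y (k + 1) - w)) ^ 2 ≤ (dnorm (Dm k) (y k - w)) ^ 2 + ε k) :
    (∃ M : ℝ, ∀ k, ‖y k‖ ≤ M) ∧
      ∀ ybar ∈ W,
        (∃ φ : ℕ → ℕ, StrictMono φ ∧
            Filter.Tendsto (fun j => y (φ j)) Filter.atTop (nhds ybar)) →
          Filter.Tendsto y Filter.atTop (nhds ybar) := by
  have hμ0 : 0 < μ := one_pos.trans_le hμ
  have hlow : ∀ k x, ‖x‖ ^ 2 ≤ μ * dnorm (Dm k) x ^ 2 := fun k =>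
    norm_sq_le_mul_dnorm_sq hμ0 (hpos k) fun i => (heig k i).1
  have hup : ∀ k x, dnorm (Dm k) x ^ 2 ≤ μ * ‖x‖ ^ 2 := fun k =>
    dnorm_sq_le_mul_norm_sq (hpos k).posSemidef fun i => (heig k i).2
  have hlim : ∀ w ∈ W, ∃ L, Tendsto (fun k => dnorm (Dm k) (y k - w) ^ 2) atTop (𝓝 L) := by
    intro w hw
    obtain ⟨ε, -, hε, hstep⟩ := hqf w hw
    exact exists_tendsto_of_le_add_of_summable ⟨0, by rintro _ ⟨k, rfl⟩; positivity⟩ hε hstep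
  refine ⟨?bounded, ?convergent⟩
  · obtain ⟨w, hw⟩ := hW
    obtain ⟨L, hL⟩ := hlim w hw
    obtain ⟨B, hB⟩ := hL.bddAbove_range
    refine ⟨‖w‖ + √(μ * B), fun k => (norm_le_norm_add_norm_sub' (y k) w).trans ?_⟩
    gcongr
    exact Real.le_sqrt_of_sq_le ((hlow k _).trans (by gcongr; exact hB ⟨k, rfl⟩))
  · rintro ybar hybar ⟨φ, hφ, hyφ⟩
    obtain ⟨L, hL⟩ := hlim ybar hybar
    have hφ0 : Tendsto (fun j => dnorm (Dm (φ j)) (y (φ j) - ybar) ^ 2) atTop (𝓝 0) := by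
      have := ((tendsto_iff_norm_sub_tendsto_zero.1 hyφ).pow 2).const_mul μ
      exact squeeze_zero (fun _ => sq_nonneg _) (fun j => hup _ _) (by simpa using this)
    obtain rfl : L = 0 := tendsto_nhds_unique (hL.comp hφ.tendsto_atTop) hφ0
    exact tendsto_of_norm_sub_sq_le (by simpa using hL.const_mul μ) fun k => hlow k _
end

section
/- Let C be closed and convex, u ∈ C, v ∈ ℝⁿ, 0 ≤ γ < 1/2, and let w ∈ C satisfy ⟨D(v − w), y − w⟩ ≤ γ‖w − u‖_D² for all y ∈ C. Then for every x ∈ C: ‖w − x‖_D² ≤ ‖x − v‖_D² + (2γ/(1−2γ))‖u − v‖_D² − (1/(1−2γ))‖w − v‖_D². -/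
open RealInnerProductSpace

theorem stmt6 {n : ℕ} (C : Set (EucSp n)) (hcl : IsClosed C) (hconv : Convex ℝ C)
    (D : Matrix (Fin n) (Fin n) ℝ) (hD : D.PosDef)
    (u : EucSp n) (hu : u ∈ C) (v : EucSp n) (γ : ℝ) (hγ : 0 ≤ γ ∧ γ < 1 / 2)
    (w : EucSp n) (hwC : w ∈ C)
    (hw : ∀ y ∈ C, dipr D (v - w) (y - w) ≤ γ * (dnorm D (w - u)) ^ 2) :
    ∀ x ∈ C, (dnorm D (w - x)) ^ 2 ≤ (dnorm D (x - v)) ^ 2 +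
      (2 * γ / (1 - 2 * γ)) * (dnorm D (u - v)) ^ 2 -
        (1 / (1 - 2 * γ)) * (dnorm D (w - v)) ^ 2 := by
  intro x hx
  obtain ⟨hγ0, hγh⟩ := hγ
  have hc : (0:ℝ) < 1 - 2 * γ := by linarith
  have hnn : ∀ a : EucSp n, 0 ≤ dipr D a a := by
    intro a
    have h := hD.posSemidef.re_dotProduct_nonneg a
    simpa [dipr, Matrix.toEuclideanLin_apply, EuclideanSpace.inner_eq_star_dotProduct,
      dotProduct, mul_comm] using h
  have hsq : ∀ a : EucSp n, (dnorm D a) ^ 2 = dipr D a a := fun a => Real.sq_sqrt (hnn a)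
  have hsym : ∀ a b : EucSp n, dipr D a b = dipr D b a := by
    intro a b
    have hs := Matrix.isHermitian_iff_isSymmetric.mp hD.1
    rw [dipr, dipr, hs a b, real_inner_comm]
  have hexp : ∀ a b c d : EucSp n, dipr D (a - b) (c - d) =
      dipr D a c - dipr D a d - dipr D b c + dipr D b d := by
    intro a b c d
    simp [dipr, map_sub, inner_sub_left, inner_sub_right]
    ring
  have h1 := hw x hx
  have h2 := hw u hu
  simp only [hsq] at h1 h2 ⊢
  have key : dipr D (w - x) (w - x) ≤ dipr D (x - v) (x - v) +
      (2 * γ * dipr D (u - v) (u - v) - dipr D (w - v) (w - v)) / (1 - 2 * γ) := by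
    rw [← sub_le_iff_le_add', le_div_iff₀ hc]
    simp only [hexp] at h1 h2 ⊢
    nlinarith [hsym v w, hsym v x, hsym v u, hsym w x, hsym w u, hsym u x,
      mul_le_mul_of_nonneg_left h1 hc.le, mul_le_mul_of_nonneg_left h2 hγ0]
  refine key.trans_eq ?_
  ring
end

section
/- Let C be a bounded closed convex set, u ∈ C, v ∈ ℝⁿ, and 0 < γ < 1/2. If 0 < ε < γ‖u − P_C^D(v)‖_D² / (1 − γ + ‖v − P_C^D(v)‖_D + 2γ‖u − P_C^D(v)‖_D + diam C), then every w ∈ C with ‖w − P_C^D(v)‖_D ≤ ε satisfies ⟨D(v − w), z − w⟩ ≤ γ‖w − u‖_D² for all z ∈ C. -/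
open RealInnerProductSpace

/-!
Factoring `D = Bᴴ B` turns `⟪x, y⟫_D` into the Euclidean `⟪B x, B y⟫`, so the problem lives in a
real inner product space, where the projection `p` satisfies `⟪v - p, z - p⟫ ≤ 0` on `C`.
Splitting `⟪v - w, z - w⟫` through `p` bounds it by `ε (‖v - p‖ + diam C)`, while
`‖w - u‖ ≥ ‖u - p‖ - ε`; the bound on `ε` is exactly what makes
`ε (‖v - p‖ + diam C) ≤ γ (‖u - p‖ - ε)²`.
-/

open scoped MatrixOrder

section InnerProductSpace

variable {E : Type*} [NormedAddCommGroup E] [InnerProductSpace ℝ E]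

theorem inner_sub_sub_nonpos_of_forall_norm_sub_le {K : Set E} (hK : Convex ℝ K) {v p z : E}
    (hp : p ∈ K) (hmin : ∀ y ∈ K, ‖p - v‖ ≤ ‖y - v‖) (hz : z ∈ K) : ⟪v - p, z - p⟫ ≤ 0 := by
  have : Nonempty K := ⟨⟨p, hp⟩⟩
  refine (norm_eq_iInf_iff_real_inner_le_zero hK hp).1 (le_antisymm ?_ ?_) z hz
  · exact le_ciInf fun y => by simpa only [norm_sub_rev v] using hmin y y.2
  · exact ciInf_le ⟨0, Set.forall_mem_range.2 fun _ => norm_nonneg _⟩ (⟨p, hp⟩ : K)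

theorem inner_sub_sub_le_mul_sq_of_near_projection {γ ε δ : ℝ} (hγ0 : 0 < γ) (hγ1 : γ < 1)
    {u v p w z : E} (hvar : ⟪v - p, z - p⟫ ≤ 0) (hwp : ‖w - p‖ ≤ ε) (hzw : ‖z - w‖ ≤ δ)
    (hε : ε < γ * ‖u - p‖ ^ 2 / (1 - γ + ‖v - p‖ + 2 * γ * ‖u - p‖ + δ)) :
    ⟪v - w, z - w⟫ ≤ γ * ‖w - u‖ ^ 2 := by
  set A := ‖u - p‖
  set V := ‖v - p‖
  have hA0 : 0 ≤ A := norm_nonneg _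
  have hV0 : 0 ≤ V := norm_nonneg _
  have hε0 : 0 ≤ ε := (norm_nonneg _).trans hwp
  have hδ0 : 0 ≤ δ := (norm_nonneg _).trans hzw
  have hεK : ε * (1 - γ + V + 2 * γ * A + δ) < γ * A ^ 2 :=
    (lt_div_iff₀ (by nlinarith)).1 hε
  have hε1γ : 0 ≤ ε * (1 - γ) := mul_nonneg hε0 (sub_nonneg.2 hγ1.le)
  have hAε : 0 ≤ A - ε := by
    nlinarith [mul_nonneg hε0 hV0, mul_nonneg hε0 hδ0, mul_nonneg hγ0.le hA0]
  have hAw : A - ε ≤ ‖w - u‖ := by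
    have := norm_sub_le_norm_sub_add_norm_sub u w p
    rw [norm_sub_rev u w] at this
    linarith
  have hsplit : ⟪v - w, z - w⟫ = ⟪v - p, z - p⟫ + ⟪v - p, p - w⟫ + ⟪p - w, z - w⟫ := by
    rw [← inner_add_right, sub_add_sub_cancel, ← inner_add_left, sub_add_sub_cancel]
  have h1 : ⟪v - p, p - w⟫ ≤ V * ε := by
    refine (real_inner_le_norm _ _).trans (mul_le_mul_of_nonneg_left ?_ hV0)
    rwa [norm_sub_rev]
  have h2 : ⟪p - w, z - w⟫ ≤ ε * δ := by
    refine (real_inner_le_norm _ _).trans (mul_le_mul ?_ hzw (norm_nonneg _) hε0)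
    rwa [norm_sub_rev]
  calc ⟪v - w, z - w⟫ ≤ V * ε + ε * δ := by linarith
    _ ≤ γ * (A - ε) ^ 2 := by nlinarith [mul_nonneg hγ0.le (sq_nonneg ε)]
    _ ≤ γ * ‖w - u‖ ^ 2 := by gcongr

end InnerProductSpace

section DInner

variable {n : ℕ} {D : Matrix (Fin n) (Fin n) ℝ}

theorem exists_linearMap_dipr_eq_inner (hD : D.PosSemidef) :
    ∃ T : EucSp n →ₗ[ℝ] EucSp n, ∀ x y, dipr D x y = ⟪T x, T y⟫ := by
  obtain ⟨B, rfl⟩ := CStarAlgebra.nonneg_iff_eq_star_mul_self.mp hD.nonneg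
  refine ⟨B.toEuclideanLin, fun x y => ?_⟩
  have hBB : (star B * B).toEuclideanLin x =
      B.conjTranspose.toEuclideanLin (B.toEuclideanLin x) := by
    simp [Matrix.toLpLin_apply, Matrix.mulVec_mulVec, Matrix.star_eq_conjTranspose]
  rw [dipr, hBB, Matrix.toEuclideanLin_conjTranspose_eq_adjoint, LinearMap.adjoint_inner_left]

theorem dnorm_eq_norm {T : EucSp n →ₗ[ℝ] EucSp n} (hT : ∀ x y, dipr D x y = ⟪T x, T y⟫)
    (x : EucSp n) : dnorm D x = ‖T x‖ := by
  rw [dnorm, hT, real_inner_self_eq_norm_sq, Real.sqrt_sq (norm_nonneg _)]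

end DInner

theorem stmt8_general {n : ℕ} (C : Set (EucSp n)) (hconv : Convex ℝ C)
    (D : Matrix (Fin n) (Fin n) ℝ) (hD : D.PosDef)
    (u : EucSp n) (v : EucSp n) (γ : ℝ) (hγ : 0 < γ ∧ γ < 1 / 2)
    (p : EucSp n) (hp : IsDProj D C v p)
    (diamC : ℝ) (hdiam : ∀ a ∈ C, ∀ b ∈ C, dnorm D (a - b) ≤ diamC)
    (ε : ℝ)
    (hε : ε < γ * (dnorm D (u - p)) ^ 2 /
      (1 - γ + dnorm D (v - p) + 2 * γ * dnorm D (u - p) + diamC)) :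
    ∀ w ∈ C, dnorm D (w - p) ≤ ε →
      ∀ z ∈ C, dipr D (v - w) (z - w) ≤ γ * (dnorm D (w - u)) ^ 2 := by
  intro w hw hwp z hz
  obtain ⟨T, hT⟩ := exists_linearMap_dipr_eq_inner hD.posSemidef
  simp only [dnorm_eq_norm hT, map_sub] at hdiam hwp hε ⊢
  have hmin : ∀ y ∈ T '' C, ‖T p - T v‖ ≤ ‖y - T v‖ := by
    rintro _ ⟨y, hy, rfl⟩
    simpa only [dnorm_eq_norm hT, map_sub] using hp.2 y hy
  rw [hT, map_sub, map_sub]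
  refine inner_sub_sub_le_mul_sq_of_near_projection hγ.1 (by linarith [hγ.2]) ?_ hwp
    (hdiam z hz w hw) hε
  exact inner_sub_sub_nonpos_of_forall_norm_sub_le (hconv.linear_image T) ⟨p, hp.1, rfl⟩ hmin
    ⟨z, hz, rfl⟩

theorem stmt8 {n : ℕ} (C : Set (EucSp n)) (hcl : IsClosed C) (hconv : Convex ℝ C)
    (D : Matrix (Fin n) (Fin n) ℝ) (hD : D.PosDef)
    (u : EucSp n) (hu : u ∈ C) (v : EucSp n) (γ : ℝ) (hγ : 0 < γ ∧ γ < 1 / 2)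
    (p : EucSp n) (hp : IsDProj D C v p)
    (diamC : ℝ) (hdiam : ∀ a ∈ C, ∀ b ∈ C, dnorm D (a - b) ≤ diamC)
    (ε : ℝ) (hε0 : 0 < ε)
    (hε : ε < γ * (dnorm D (u - p)) ^ 2 /
      (1 - γ + dnorm D (v - p) + 2 * γ * dnorm D (u - p) + diamC)) :
    ∀ w ∈ C, dnorm D (w - p) ≤ ε →
      ∀ z ∈ C, dipr D (v - w) (z - w) ≤ γ * (dnorm D (w - u)) ^ 2 :=
  stmt8_general C hconv D hD u v γ hγ p hp diamC hdiam ε hε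
end

section
/- Let C be closed and convex, x ∈ C, α > 0, ζ ∈ (0,1], and z(α) = x − αD⁻¹∇f(x). Then x is a stationary point of the problem min{f(y) : y ∈ C} (i.e., ⟨∇f(x), y − x⟩ ≥ 0 for all y ∈ C) if and only if x ∈ 𝒫_{C,ζ}^D(x, z(α)). -/
/-!
Since `D (x - z) = α ∇f(x)` and `α > 0`, stationarity of `x` is the variational inequality
`⟨x - z, y - x⟩_D ≥ 0` for all `y ∈ C`, which characterises `x` as a `D`-projection of `z` onto
the convex set `C`. Because `ζ > 0`, the inequality defining `x ∈ 𝒫_{C,ζ}^D(x, z)` reduces to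
`‖x - z‖_D ≤ ‖P_C^D(z) - z‖_D`, which says exactly that `x` is such a projection too.
-/

open RealInnerProductSpace

open Set Filter Topology

section DInner

variable {n : ℕ} {D : Matrix (Fin n) (Fin n) ℝ}

lemma dipr_add_left (u v w : EucSp n) : dipr D (u + v) w = dipr D u w + dipr D v w := by
  simp only [dipr, map_add, inner_add_left]

lemma dipr_add_right (u v w : EucSp n) : dipr D u (v + w) = dipr D u v + dipr D u w :=
  inner_add_right _ _ _

lemma dipr_smul_left (c : ℝ) (u v : EucSp n) : dipr D (c • u) v = c * dipr D u v := by
  simp only [dipr, map_smul, real_inner_smul_left]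

lemma dipr_smul_right (c : ℝ) (u v : EucSp n) : dipr D u (c • v) = c * dipr D u v :=
  real_inner_smul_right _ _ _

lemma dipr_toEuclideanLin_inv (hD : IsUnit D) (u v : EucSp n) :
    dipr D (Matrix.toEuclideanLin D⁻¹ u) v = ⟪u, v⟫ := by
  have hDD : D * D⁻¹ = 1 := Matrix.mul_nonsing_inv D ((Matrix.isUnit_iff_isUnit_det D).mp hD)
  have : Matrix.toEuclideanLin D (Matrix.toEuclideanLin D⁻¹ u) = u := by
    apply (WithLp.equiv 2 _).injective
    simp [Matrix.mulVec_mulVec, hDD]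
  rw [dipr, this]

lemma dnorm_nonneg (u : EucSp n) : 0 ≤ dnorm D u :=
  Real.sqrt_nonneg _

variable (hD : D.PosSemidef)
include hD

lemma dipr_comm (u v : EucSp n) : dipr D u v = dipr D v u := by
  rw [dipr, dipr, (Matrix.isSymmetric_toEuclideanLin_iff.mpr hD.isHermitian) u v,
    real_inner_comm]

lemma dipr_self_nonneg (u : EucSp n) : 0 ≤ dipr D u u :=
  (Matrix.isPositive_toEuclideanLin_iff.mpr hD).inner_nonneg_left u

lemma dnorm_le_dnorm_iff (u v : EucSp n) : dnorm D u ≤ dnorm D v ↔ dipr D u u ≤ dipr D v v :=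
  Real.sqrt_le_sqrt_iff (dipr_self_nonneg hD v)

lemma dipr_add_self (u v : EucSp n) :
    dipr D (u + v) (u + v) = dipr D u u + 2 * dipr D u v + dipr D v v := by
  rw [dipr_add_left, dipr_add_right, dipr_add_right, dipr_comm hD v u]
  ring

end DInner

lemma nonneg_of_forall_mem_Ioc_nonneg_add_mul {a b : ℝ}
    (h : ∀ t ∈ Ioc (0 : ℝ) 1, 0 ≤ a + t * b) : 0 ≤ a := by
  have hlim : Tendsto (fun t : ℝ => a + t * b) (𝓝[>] 0) (𝓝 a) :=
    tendsto_nhdsWithin_of_tendsto_nhds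
      ((by fun_prop : Continuous fun t : ℝ => a + t * b).tendsto' 0 a (by simp))
  exact ge_of_tendsto hlim (eventually_of_mem (Ioc_mem_nhdsGT zero_lt_one) h)

theorem isDProj_iff_forall_dipr_nonneg {n : ℕ} {D : Matrix (Fin n) (Fin n) ℝ} (hD : D.PosSemidef)
    {C : Set (EucSp n)} (hC : Convex ℝ C) {v x : EucSp n} (hx : x ∈ C) :
    IsDProj D C v x ↔ ∀ y ∈ C, 0 ≤ dipr D (x - v) (y - x) := by
  have expand : ∀ y, dipr D (y - v) (y - v) =
      dipr D (x - v) (x - v) + 2 * dipr D (x - v) (y - x) + dipr D (y - x) (y - x) := fun y => by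
    rw [← dipr_add_self hD, sub_add_sub_cancel']
  simp only [IsDProj, hx, true_and, dnorm_le_dnorm_iff hD]
  constructor
  · intro hmin y hy
    have hseg : ∀ t ∈ Ioc (0 : ℝ) 1,
        0 ≤ 2 * dipr D (x - v) (y - x) + t * dipr D (y - x) (y - x) := by
      rintro t ⟨ht0, ht1⟩
      have hmem : x + t • (y - x) ∈ C := by
        simpa using hC.add_smul_sub_mem hx hy ⟨ht0.le, ht1⟩
      have := hmin _ hmem
      rw [expand (x + t • (y - x)), add_sub_cancel_left, dipr_smul_left, dipr_smul_right,
        dipr_smul_right] at this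
      nlinarith
    linarith [nonneg_of_forall_mem_Ioc_nonneg_add_mul hseg]
  · intro hvi y hy
    linarith [expand y, hvi y hy, dipr_self_nonneg hD (y - x)]

lemma isDProj_iff_dnorm_le {n : ℕ} {D : Matrix (Fin n) (Fin n) ℝ} {C : Set (EucSp n)}
    {v p x : EucSp n} (hp : IsDProj D C v p) (hx : x ∈ C) :
    IsDProj D C v x ↔ dnorm D (x - v) ≤ dnorm D (p - v) :=
  ⟨fun hxp => hxp.2 p hp.1, fun hle => ⟨hx, fun y hy => hle.trans (hp.2 y hy)⟩⟩

lemma sq_le_convex_comb_sq_iff {a b ζ : ℝ} (ha : 0 ≤ a) (hb : 0 ≤ b) (hζ : 0 < ζ) :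
    a ^ 2 ≤ ζ * b ^ 2 + (1 - ζ) * a ^ 2 ↔ a ≤ b := by
  rw [← pow_le_pow_iff_left₀ ha hb two_ne_zero]
  constructor <;> intro h <;> nlinarith

theorem stmt10_general {n : ℕ} (C : Set (EucSp n)) (hconv : Convex ℝ C)
    (D : Matrix (Fin n) (Fin n) ℝ) (hD : D.PosDef)
    (g : EucSp n → EucSp n)
    (x : EucSp n) (hx : x ∈ C) (α : ℝ) (hα : 0 < α) (ζ : ℝ) (hζ : 0 < ζ ∧ ζ ≤ 1)
    (z : EucSp n) (hz : z = x - α • (Matrix.toEuclideanLin D⁻¹) (g x))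
    (p : EucSp n) (hp : IsDProj D C z p) :
    (∀ y ∈ C, 0 ≤ ⟪g x, y - x⟫) ↔
      (dnorm D (x - z)) ^ 2 ≤
        ζ * (dnorm D (p - z)) ^ 2 + (1 - ζ) * (dnorm D (x - z)) ^ 2 := by
  have hxz : ∀ u, dipr D (x - z) u = α * ⟪g x, u⟫ := fun u => by
    rw [hz, sub_sub_cancel, dipr_smul_left, dipr_toEuclideanLin_inv hD.isUnit]
  rw [sq_le_convex_comb_sq_iff (dnorm_nonneg _) (dnorm_nonneg _) hζ.1,
    ← isDProj_iff_dnorm_le hp hx, isDProj_iff_forall_dipr_nonneg hD.posSemidef hconv hx]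
  simp only [hxz, mul_nonneg_iff_of_pos_left hα]

theorem stmt10 {n : ℕ} (C : Set (EucSp n)) (hcl : IsClosed C) (hconv : Convex ℝ C)
    (D : Matrix (Fin n) (Fin n) ℝ) (hD : D.PosDef)
    (f : EucSp n → ℝ) (g : EucSp n → EucSp n) (hf : ∀ x, HasGradientAt f (g x) x)
    (x : EucSp n) (hx : x ∈ C) (α : ℝ) (hα : 0 < α) (ζ : ℝ) (hζ : 0 < ζ ∧ ζ ≤ 1)
    (z : EucSp n) (hz : z = x - α • (Matrix.toEuclideanLin D⁻¹) (g x))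
    (p : EucSp n) (hp : IsDProj D C z p) :
    (∀ y ∈ C, 0 ≤ ⟪g x, y - x⟫) ↔
      (dnorm D (x - z)) ^ 2 ≤
        ζ * (dnorm D (p - z)) ^ 2 + (1 - ζ) * (dnorm D (x - z)) ^ 2 :=
  stmt10_general C hconv D hD g x hx α hα ζ hζ z hz p hp
end

section
/- In the inexact SGP method with non-monotone tolerance parameters, if δ_min > 0 then the series Σₖ νₖ converges; in particular νₖ → 0. -/
open RealInnerProductSpace

theorem stmt13 {n : ℕ} (C : Set (EucSp n)) (f : EucSp n → ℝ)
    (X w : ℕ → EucSp n) (g : EucSp n → EucSp n)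
    (σ δmin fstar : ℝ) (τ ν δ : ℕ → ℝ)
    (hσ : 0 < σ) (hτ : ∀ k, 0 < τ k ∧ τ k ≤ 1)
    (hXC : ∀ k, X k ∈ C) (hbdd : ∀ x ∈ C, fstar ≤ f x)
    (hdesc : ∀ k, ⟪g (X k), w k - X k⟫ < 0) (hν : ∀ k, 0 ≤ ν k)
    (hls : ∀ k, f (X (k + 1)) ≤ f (X k) + σ * τ k * ⟪g (X k), w k - X k⟫ + ν k)
    (hδmin : 0 < δmin)
    (hδ : ∀ k, δmin ≤ δ (k + 1) ∧ δ (k + 1) ≤ 1)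
    (hup : ∀ k, ν (k + 1) ≤ (1 - δ (k + 1)) * (f (X k) + ν k - f (X (k + 1)))) :
    Summable ν ∧ Filter.Tendsto ν Filter.atTop (nhds 0) := by
  set a : ℕ → ℝ := fun k => f (X k) + ν k with ha
  set d : ℕ → ℝ := fun k => a k - f (X (k + 1)) with hdd
  have hd0 : ∀ k, 0 ≤ d k := by
    intro k
    have h1 := hls k
    have h2 := hdesc k
    have h3 := (hτ k).1
    simp only [hdd, ha]
    nlinarith [mul_pos hσ h3]
  have key : ∀ k, δmin * d k ≤ a k - a (k + 1) := by
    intro k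
    have h1 := hup k
    have h2 := (hδ k).1
    have h3 := (hδ k).2
    have h4 := hd0 k
    simp only [hdd, ha] at *
    nlinarith
  have hafstar : ∀ k, fstar ≤ a k := fun k =>
    le_trans (hbdd _ (hXC k)) (le_add_of_nonneg_right (hν k))
  have hsum : ∀ m, ∑ k ∈ Finset.range m, d k ≤ (a 0 - fstar) / δmin := by
    intro m
    rw [le_div_iff₀ hδmin]
    calc (∑ k ∈ Finset.range m, d k) * δmin
        = ∑ k ∈ Finset.range m, δmin * d k := by
          rw [Finset.sum_mul]; exact Finset.sum_congr rfl (fun k _ => mul_comm _ _)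
      _ ≤ ∑ k ∈ Finset.range m, (a k - a (k + 1)) :=
          Finset.sum_le_sum (fun k _ => key k)
      _ = a 0 - a m := by rw [Finset.sum_range_sub' a]
      _ ≤ a 0 - fstar := by linarith [hafstar m]
  have hdsum : Summable d := summable_of_sum_range_le hd0 hsum
  have hνd : ∀ k, ν (k + 1) ≤ d k := by
    intro k
    have h1 := hup k
    have h2 := (hδ k).1
    have h4 := hd0 k
    simp only [hdd, ha] at *
    nlinarith
  have hνs : Summable (fun k => ν (k + 1)) :=
    Summable.of_nonneg_of_le (fun k => hν (k + 1)) hνd hdsum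
  have hSν : Summable ν := (summable_nat_add_iff 1).mp hνs
  exact ⟨hSν, hSν.tendsto_atTop_zero⟩
end

section
/- Under assumptions A1–A3 the inexact SGP method satisfies, for every N ≥ 1: min{‖wᵏ − xᵏ‖ : k = 0,…,N−1} ≤ √(2α_max μ [f(x⁰) − f* + Σₖ νₖ] / (στ_min)) · 1/√N. -/
/-! Each step of the line search decreases `f` by at least `σ τ_min ‖wᵏ - xᵏ‖² / (2 α_max μ)`, up to
the error `νₖ`. Telescoping over `k < N` and bounding `f(x^N)` below by `f*` bounds the sum of the
`N` squared residuals by `2 α_max μ [f(x⁰) - f* + Σ νₖ] / (σ τ_min)`, and the smallest of them is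
at most the average. -/

open RealInnerProductSpace

open Finset

theorem Finset.exists_card_nsmul_le_sum {ι M : Type*} [AddCommMonoid M] [LinearOrder M]
    [IsOrderedAddMonoid M] {s : Finset ι} (hs : s.Nonempty) (f : ι → M) :
    ∃ i ∈ s, #s • f i ≤ ∑ j ∈ s, f j := by
  obtain ⟨i, hi, hmin⟩ := s.exists_min_image f hs
  exact ⟨i, hi, s.card_nsmul_le_sum f (f i) hmin⟩

/-- Sufficient decrease for an Armijo-type line search with step sizes bounded below by `s₀`. -/
theorem le_sub_mul_add_of_le_add_mul {a a' s s₀ t c r ν : ℝ} (hs : s₀ ≤ s) (hs₀ : 0 ≤ s₀)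
    (ht : t ≤ -c * r) (hcr : 0 ≤ c * r) (h : a' ≤ a + s * t + ν) :
    a' ≤ a - s₀ * c * r + ν := by
  have hst : s * t ≤ s₀ * t := mul_le_mul_of_nonpos_right hs (by linarith)
  have hs₀t : s₀ * t ≤ s₀ * (-c * r) := mul_le_mul_of_nonneg_left ht hs₀
  linarith

theorem sum_range_le_of_succ_le_sub_add {a d ν : ℕ → ℝ} {m : ℝ}
    (hstep : ∀ k, a (k + 1) ≤ a k - d k + ν k) (hm : ∀ k, m ≤ a k) (hν : ∀ k, 0 ≤ ν k)
    (hνsum : Summable ν) (N : ℕ) :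
    ∑ k ∈ range N, d k ≤ a 0 - m + ∑' k, ν k :=
  calc ∑ k ∈ range N, d k ≤ ∑ k ∈ range N, ((a k - a (k + 1)) + ν k) :=
        sum_le_sum fun k _ => by linarith [hstep k]
    _ = a 0 - a N + ∑ k ∈ range N, ν k := by rw [sum_add_distrib, sum_range_sub']
    _ ≤ a 0 - m + ∑' k, ν k := by
        linarith [hm N, hνsum.sum_le_tsum (range N) fun k _ => hν k]

theorem le_sqrt_div_mul_one_div_sqrt {x c B N : ℝ} (hc : 0 < c) (hN : 0 < N)
    (h : N * (c * x ^ 2) ≤ B) : x ≤ Real.sqrt (B / c) * (1 / Real.sqrt N) := by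
  have hx2 : x ^ 2 ≤ B / c / N := by
    rw [div_div, le_div_iff₀ (by positivity)]
    linarith
  calc x ≤ Real.sqrt (B / c / N) := Real.le_sqrt_of_sq_le hx2
    _ = Real.sqrt (B / c) * (1 / Real.sqrt N) := by
        rw [Real.sqrt_div' _ hN.le, div_eq_mul_one_div]

theorem stmt16_general {n : ℕ} (C : Set (EucSp n))
    (f : EucSp n → ℝ) (g : EucSp n → EucSp n)
    (μ σ αmax τmin fstar : ℝ) (hμ : 1 ≤ μ) (hσ : 0 < σ ∧ σ < 1)
    (hαmax : 0 < αmax) (hτmin : 0 < τmin)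
    (hfstar : ∀ x ∈ C, fstar ≤ f x)
    (τ ν : ℕ → ℝ) (hτ : ∀ k, τmin ≤ τ k ∧ τ k ≤ 1) (hν : ∀ k, 0 ≤ ν k)
    (hνsum : Summable ν)
    (X w : ℕ → EucSp n) (hXC : ∀ k, X k ∈ C)
    (hkey : ∀ k, ⟪g (X k), w k - X k⟫ ≤ -(1 / (2 * αmax * μ)) * ‖w k - X k‖ ^ 2)
    (hls : ∀ k, f (X (k + 1)) ≤ f (X k) + σ * τ k * ⟪g (X k), w k - X k⟫ + ν k) :
    ∀ N : ℕ, 1 ≤ N → ∃ k < N, ‖w k - X k‖ ≤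
      Real.sqrt (2 * αmax * μ * (f (X 0) - fstar + ∑' k, ν k) / (σ * τmin)) *
        (1 / Real.sqrt N) := by
  intro N hN
  obtain ⟨hσ₀, -⟩ := hσ
  have hμ₀ : 0 < μ := by linarith
  set c := σ * τmin * (1 / (2 * αmax * μ)) with hc
  have hc₀ : 0 < c := by positivity
  have hstep (k : ℕ) : f (X (k + 1)) ≤ f (X k) - c * ‖w k - X k‖ ^ 2 + ν k :=
    le_sub_mul_add_of_le_add_mul (mul_le_mul_of_nonneg_left (hτ k).1 hσ₀.le) (by positivity)
      (hkey k) (by positivity) (hls k)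
  have hsum := sum_range_le_of_succ_le_sub_add hstep (fun k => hfstar _ (hXC k)) hν hνsum N
  obtain ⟨k, hk, hmin⟩ := exists_card_nsmul_le_sum ⟨0, mem_range.2 hN⟩
    fun k => c * ‖w k - X k‖ ^ 2
  refine ⟨k, mem_range.1 hk, ?_⟩
  have hconst : 2 * αmax * μ * (f (X 0) - fstar + ∑' k, ν k) / (σ * τmin) =
      (f (X 0) - fstar + ∑' k, ν k) / c := by
    rw [hc]; field_simp
  rw [hconst]
  refine le_sqrt_div_mul_one_div_sqrt hc₀ (by exact_mod_cast hN) ?_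
  rw [card_range, nsmul_eq_mul] at hmin
  exact hmin.trans hsum

theorem stmt16 {n : ℕ} (C : Set (EucSp n)) (hcl : IsClosed C) (hconv : Convex ℝ C)
    (f : EucSp n → ℝ) (g : EucSp n → EucSp n) (hf : ∀ x, HasGradientAt f (g x) x)
    (μ σ αmax τmin fstar : ℝ) (hμ : 1 ≤ μ) (hσ : 0 < σ ∧ σ < 1)
    (hαmax : 0 < αmax) (hτmin : 0 < τmin)
    (hfstar : ∀ x ∈ C, fstar ≤ f x)
    (τ ν : ℕ → ℝ) (hτ : ∀ k, τmin ≤ τ k ∧ τ k ≤ 1) (hν : ∀ k, 0 ≤ ν k)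
    (hνsum : Summable ν)
    (X w : ℕ → EucSp n) (hXC : ∀ k, X k ∈ C)
    (hkey : ∀ k, ⟪g (X k), w k - X k⟫ ≤ -(1 / (2 * αmax * μ)) * ‖w k - X k‖ ^ 2)
    (hls : ∀ k, f (X (k + 1)) ≤ f (X k) + σ * τ k * ⟪g (X k), w k - X k⟫ + ν k) :
    ∀ N : ℕ, 1 ≤ N → ∃ k < N, ‖w k - X k‖ ≤
      Real.sqrt (2 * αmax * μ * (f (X 0) - fstar + ∑' k, ν k) / (σ * τmin)) *
        (1 / Real.sqrt N) :=
  stmt16_general C f g μ σ αmax τmin fstar hμ hσ hαmax hτmin hfstar τ ν hτ hν hνsum X w hXC hkey hls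
end
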